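/- Every abelian subgroup of a Frobenius complement is cyclic. -/

import Mathlib

/-!
Let `u, v` be commuting elements of prime order `p` of a Frobenius complement `H` acting on `K`,
with `v ∉ ⟨u⟩`. As `u` fixes only `1`, counting fixed points of the `p`-group `E = ⟨u, v⟩` gives
`|K| ≡ 1 [MOD p]`. The number of Sylow subgroups of `K` divides `|K|`, so `E` fixes one of them
and hence stabilises its centre `Z ≠ 1`.
On the abelian group `Z` every fixed-point-free `h` with `h ^ p = 1` has trivial norm
`∏ k < p, h ^ k • x`; the product of the norms of the `p` elements `u * v ^ d` is `x ^ p` times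
`u`-translates of norms of powers of `v`, so `x ^ p = 1` on `Z`, contradicting `p ∤ |K|`.
Thus in an abelian subgroup of `H` the solutions of `a ^ p = 1` form a group of order at most `p`
for every prime `p`, which forces it to be cyclic.
-/

open Finset Subgroup MulAction Pointwise
open scoped IsMulCommutative

theorem prod_range_pow_smul_eq_one {G A : Type*} [Monoid G] [CommGroup A]
    [MulDistribMulAction G A] {g : G} (hg : ∀ x : A, g • x = x → x = 1) {n : ℕ}
    (hn : g ^ n = 1) (x : A) : ∏ k ∈ range n, g ^ k • x = 1 := by
  refine hg _ ?_
  have hshift := (prod_range_succ' (fun k ↦ g ^ k • x) n).symm.trans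
    (prod_range_succ_comm (fun k ↦ g ^ k • x) n)
  rw [hn, pow_zero, mul_comm] at hshift
  simpa only [smul_prod', pow_succ', mul_smul] using mul_left_cancel hshift

theorem pow_eq_one_of_fixedPointFree {G A : Type*} [Group G] [CommGroup A]
    [MulDistribMulAction G A] (hfree : ∀ g : G, g ≠ 1 → ∀ x : A, g • x = x → x = 1)
    {p : ℕ} [hp : Fact p.Prime] {u v : G} (huv : Commute u v) (hu : u ^ p = 1) (hv : v ^ p = 1)
    (hu1 : u ≠ 1) (hvu : v ∉ zpowers u) (x : A) : x ^ p = 1 := by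
  have hvp : orderOf v = p := orderOf_eq_prime hv (by rintro rfl; exact hvu (one_mem _))
  have hvk : ∀ k, k ≠ 0 → k < p → v ^ k ≠ 1 := fun k hk0 hkp ↦
    pow_ne_one_of_lt_orderOf hk0 (hvp ▸ hkp)
  have huvd : ∀ d, u * v ^ d ≠ 1 := by
    intro d h
    have hud : u = (v ^ d)⁻¹ := eq_inv_of_mul_eq_one_left h
    refine hvu ?_
    rw [hud, zpowers_inv, mem_zpowers_pow_iff, hvp, ← Nat.coprime_iff_gcd_eq_one,
      Nat.coprime_comm, hp.out.coprime_iff_not_dvd, ← hvp, orderOf_dvd_iff_pow_eq_one]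
    exact fun hd ↦ hu1 (by rw [hud, hd, inv_one])
  have hrow : ∀ d, ∏ k ∈ range p, (u ^ k * v ^ (k * d)) • x = 1 := fun d ↦ by
    simp only [pow_mul', ← (huv.pow_right d).mul_pow]
    refine prod_range_pow_smul_eq_one (hfree _ (huvd d)) ?_ x
    rw [(huv.pow_right d).mul_pow, ← pow_mul, mul_comm, pow_mul, hu, hv, one_pow, one_mul]
  have hcol : ∀ k ∈ range p, k ≠ 0 → ∏ d ∈ range p, (u ^ k * v ^ (k * d)) • x = 1 := by
    intro k hk hk0
    simp only [pow_mul, mul_smul, ← smul_prod']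
    rw [prod_range_pow_smul_eq_one (hfree _ (hvk k hk0 (mem_range.mp hk))), smul_one]
    rw [← pow_mul, mul_comm, pow_mul, hv, one_pow]
  calc x ^ p = ∏ k ∈ range p, ∏ d ∈ range p, (u ^ k * v ^ (k * d)) • x := by
        rw [prod_eq_single_of_mem 0 (mem_range.mpr hp.out.pos) hcol]
        simp
    _ = 1 := by rw [prod_comm]; exact prod_eq_one fun d _ ↦ hrow d

abbrev Subgroup.mulDistribMulActionOfSMulMem {G K : Type*} [Monoid G] [Group K]
    [MulDistribMulAction G K] (L : Subgroup K) (hL : ∀ (g : G) {x : K}, x ∈ L → g • x ∈ L) :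
    MulDistribMulAction G L where
  smul g x := ⟨g • (x : K), hL g x.2⟩
  one_smul x := Subtype.ext (one_smul G (x : K))
  mul_smul g h x := Subtype.ext (mul_smul g h (x : K))
  smul_mul g x y := Subtype.ext (smul_mul' g (x : K) y)
  smul_one g := Subtype.ext (smul_one g)

theorem Subgroup.smul_mem_inf_centralizer {G K : Type*} [Monoid G] [Group K]
    [MulDistribMulAction G K] {Q : Subgroup K} {g : G} (hQ : g • Q = Q) {x : K}
    (hx : x ∈ Q ⊓ centralizer Q) : g • x ∈ Q ⊓ centralizer Q := by
  obtain ⟨hxQ, hxC⟩ := hx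
  refine ⟨hQ ▸ smul_mem_pointwise_smul x g Q hxQ, ?_⟩
  have hC := map_centralizer_le_centralizer_image (Q : Set K)
    (MulDistribMulAction.toMonoidHom K g) (mem_map_of_mem _ hxC)
  change g • x ∈ centralizer ((g • ·) '' (Q : Set K)) at hC
  rwa [Set.image_smul, ← coe_pointwise_smul, hQ] at hC

theorem Commute.isPGroup_zpowers_sup_zpowers {G : Type*} [Group G] {p : ℕ} {u v : G}
    (huv : Commute u v) (hu : u ^ p = 1) (hv : v ^ p = 1) :
    IsPGroup p (zpowers u ⊔ zpowers v : Subgroup G) := by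
  have hcyc : ∀ w : G, w ^ p = 1 → IsPGroup p (zpowers w) := fun w hw ↦
    .of_card_dvd_pow (n := 1) (by rwa [Nat.card_zpowers, pow_one, orderOf_dvd_iff_pow_eq_one])
  refine (hcyc u hu).to_sup_of_normal_right' (hcyc v hv) <| zpowers_le.mpr <|
    centralizer_le_normalizer _ <| mem_centralizer_iff.mpr fun _ hw ↦ ?_
  obtain ⟨k, rfl⟩ := mem_zpowers_iff.mp hw
  exact (huv.zpow_right k).eq.symm

namespace IsPGroup

variable {p : ℕ} [Fact p.Prime] {P K : Type*} [Group P] [Group K] [Finite K]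
  [MulDistribMulAction P K]

theorem not_dvd_card_of_fixedPoints_eq_one (hP : IsPGroup p P) (hfix : fixedPoints P K = {1}) :
    ¬ p ∣ Nat.card K := by
  have hmod := hP.card_modEq_card_fixedPoints K
  rw [hfix, Nat.card_unique (α := ({1} : Set K))] at hmod
  exact fun hdvd ↦ (Fact.out : p.Prime).not_dvd_one <|
    Nat.modEq_zero_iff_dvd.mp (hmod.symm.trans (Nat.modEq_zero_iff_dvd.mpr hdvd))

theorem exists_sylow_smul_eq (hP : IsPGroup p P) (hpK : ¬ p ∣ Nat.card K) (q : ℕ)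
    [Fact q.Prime] : ∃ Q : Sylow q K, ∀ g : P, g • Q = Q := by
  refine hP.nonempty_fixed_point_of_prime_not_dvd_card (Sylow q K) fun hdvd ↦ hpK ?_
  obtain ⟨Q⟩ := (inferInstance : Nonempty (Sylow q K))
  exact hdvd.trans (Q.card_dvd_index.trans (Q : Subgroup K).index_dvd_card)

theorem exists_ne_bot_isMulCommutative_smul_mem [Nontrivial K] (hP : IsPGroup p P)
    (hpK : ¬ p ∣ Nat.card K) :
    ∃ Z : Subgroup K, Z ≠ ⊥ ∧ IsMulCommutative Z ∧ ∀ (g : P) {x : K}, x ∈ Z → g • x ∈ Z := by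
  obtain ⟨q, hq, hqK⟩ := Nat.exists_prime_and_dvd (Finite.one_lt_card (α := K)).ne'
  have := Fact.mk hq
  obtain ⟨Q, hQ⟩ := hP.exists_sylow_smul_eq hpK q
  set Q' : Subgroup K := Q.toSubgroup
  have : Nontrivial Q := (nontrivial_iff_ne_bot _).mpr (Q.ne_bot_of_dvd_card hqK)
  have hcenter : (center Q).map Q'.subtype ≤ Q' ⊓ centralizer Q' := by
    rintro _ ⟨z, hz, rfl⟩
    exact ⟨z.2, fun y hy ↦ congrArg Subtype.val (mem_center_iff.mp hz ⟨y, hy⟩)⟩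
  refine ⟨Q' ⊓ centralizer Q', ne_bot_of_le_ne_bot ?_ hcenter,
    ⟨⟨fun a b ↦ Subtype.ext (mem_centralizer_iff.mp a.2.2 b b.2.1).symm⟩⟩,
    fun g x hx ↦ smul_mem_inf_centralizer (congrArg Sylow.toSubgroup (hQ g)) hx⟩
  rw [Ne, map_eq_bot_iff_of_injective _ Q'.subtype_injective]
  exact Q.isPGroup'.bot_lt_center.ne'

end IsPGroup

theorem mem_zpowers_of_fixedPointFree {H K : Type*} [Group H] [Group K] [Finite K]
    [Nontrivial K] [MulDistribMulAction H K]
    (hfree : ∀ h : H, h ≠ 1 → ∀ x : K, h • x = x → x = 1) {p : ℕ} [Fact p.Prime] {u v : H}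
    (huv : Commute u v) (hu : u ^ p = 1) (hv : v ^ p = 1) (hu1 : u ≠ 1) : v ∈ zpowers u := by
  by_contra hvu
  set E := zpowers u ⊔ zpowers v
  have hE : IsPGroup p E := huv.isPGroup_zpowers_sup_zpowers hu hv
  set u' : E := ⟨u, mem_sup_left (mem_zpowers u)⟩
  set v' : E := ⟨v, mem_sup_right (mem_zpowers v)⟩
  have hpK : ¬ p ∣ Nat.card K := hE.not_dvd_card_of_fixedPoints_eq_one <|
    Set.eq_singleton_iff_unique_mem.mpr ⟨fun _ ↦ smul_one _, fun x hx ↦ hfree u hu1 x (hx u')⟩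
  obtain ⟨Z, hZ, hZcomm, hZE⟩ := hE.exists_ne_bot_isMulCommutative_smul_mem hpK
  let := Z.mulDistribMulActionOfSMulMem hZE
  have hvu' : v' ∉ zpowers u' := fun hv' ↦ by
    obtain ⟨k, hk⟩ := mem_zpowers_iff.mp hv'
    exact hvu (mem_zpowers_iff.mpr ⟨k, congrArg Subtype.val hk⟩)
  have : Nontrivial Z := (nontrivial_iff_ne_bot Z).mpr hZ
  obtain ⟨z, hz⟩ := exists_ne (1 : Z)
  have hzp : z ^ p = 1 := pow_eq_one_of_fixedPointFree (G := E) (u := u') (v := v')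
    (fun g hg x hx ↦ Subtype.ext (hfree g (fun h ↦ hg (Subtype.ext h)) x (congrArg Subtype.val hx)))
    (Subtype.ext huv.eq) (Subtype.ext hu) (Subtype.ext hv)
    (fun h ↦ hu1 (congrArg Subtype.val h)) hvu' z
  exact hpK ((orderOf_eq_prime hzp hz ▸ orderOf_dvd_natCard z).trans (card_subgroup_dvd_card Z))

theorem card_pow_eq_one_le_of_prime {G : Type*} [CommGroup G] [Fintype G] [DecidableEq G]
    (h : ∀ p, p.Prime → #{a : G | a ^ p = 1} ≤ p) {n : ℕ} (hn : 0 < n) :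
    #{a : G | a ^ n = 1} ≤ n := by
  induction n using Nat.strong_induction_on with
  | _ n ih =>
  rcases eq_or_ne n 1 with rfl | hn1
  · exact card_le_one.mpr (by simp)
  set p := n.minFac
  have hp : p.Prime := Nat.minFac_prime hn1
  obtain ⟨m, hnm⟩ : p ∣ n := n.minFac_dvd
  have hm : 0 < m := Nat.pos_of_mul_pos_left (hnm ▸ hn)
  have hmn : m < n := hnm ▸ lt_mul_left hm hp.one_lt
  -- `a ↦ a ^ p` maps the `n`-torsion into the `m`-torsion; its fibres are translates of the
  -- `p`-torsion
  set S : Finset G := {a | a ^ n = 1}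
  have himage : #(S.image (· ^ p)) ≤ m := by
    refine (card_le_card fun b hb ↦ ?_).trans (ih m hmn hm)
    obtain ⟨a, ha, rfl⟩ := mem_image.mp hb
    simp_all [S, ← pow_mul]
  have hfibre : ∀ b ∈ S.image (· ^ p), #{a ∈ S | a ^ p = b} ≤ #{a : G | a ^ p = 1} := by
    intro b hb
    obtain ⟨a₀, -, rfl⟩ := mem_image.mp hb
    refine card_le_card_of_injOn (a₀⁻¹ * ·) (fun a ha ↦ ?_) fun a _ b _ hab ↦ mul_left_cancel hab
    simp_all [mul_pow]
  calc #S ≤ #{a : G | a ^ p = 1} * #(S.image (· ^ p)) := card_le_mul_card_image _ _ hfibre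
    _ ≤ p * m := Nat.mul_le_mul (h p hp) himage
    _ = n := hnm.symm

theorem isCyclic_of_pow_prime_eq_one_mem_zpowers {G : Type*} [CommGroup G] [Finite G]
    (h : ∀ p, p.Prime → ∀ a b : G, a ≠ 1 → a ^ p = 1 → b ^ p = 1 → b ∈ zpowers a) :
    IsCyclic G := by
  classical
  have := Fintype.ofFinite G
  refine isCyclic_of_card_pow_eq_one_le fun n hn ↦ card_pow_eq_one_le_of_prime (fun p hp ↦ ?_) hn
  have := Fact.mk hp
  by_cases hex : ∃ a : G, a ≠ 1 ∧ a ^ p = 1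
  · obtain ⟨a, ha1, hap⟩ := hex
    calc #{b : G | b ^ p = 1} = (↑({b : G | b ^ p = 1} : Finset G) : Set G).ncard :=
          (Set.ncard_coe_finset _).symm
      _ ≤ (zpowers a : Set G).ncard :=
          Set.ncard_le_ncard (fun b hb ↦ h p hp a b ha1 hap (by simpa using hb)) (Set.toFinite _)
      _ = p := by
          rw [← Nat.card_coe_set_eq, SetLike.coe_sort_coe, Nat.card_zpowers,
            orderOf_eq_prime hap ha1]
  · have hone : ∀ a : G, a ^ p = 1 → a = 1 := fun a ha ↦ by_contra fun ha1 ↦ hex ⟨a, ha1, ha⟩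
    refine (card_le_one.mpr fun a ha b hb ↦ ?_).trans hp.one_lt.le
    simp only [mem_filter, mem_univ, true_and] at ha hb
    rw [hone a ha, hone b hb]

/-- Every abelian subgroup of a Frobenius complement is cyclic.
Here a Frobenius complement is a finite group `H` acting (by automorphisms) on a
non-trivial finite group `K` such that every non-identity element of `H` acts
without non-trivial fixed points. -/
theorem abelian_subgroup_of_frobenius_complement_isCyclic
    (H K : Type*) [Group H] [Group K] [Finite H] [Finite K] [Nontrivial K]
    [MulDistribMulAction H K]
    (hfree : ∀ h : H, h ≠ 1 → ∀ x : K, h • x = x → x = 1)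
    (A : Subgroup H) (hA : ∀ x ∈ A, ∀ y ∈ A, x * y = y * x) :
    IsCyclic A := by
  have : IsMulCommutative A := ⟨⟨fun a b ↦ Subtype.ext (hA a a.2 b b.2)⟩⟩
  refine isCyclic_of_pow_prime_eq_one_mem_zpowers fun p hp a b ha1 hap hbp ↦ ?_
  have := Fact.mk hp
  exact mem_zpowers_of_fixedPointFree (H := A) (K := K)
    (fun g hg x hx ↦ hfree g (fun h ↦ hg (Subtype.ext h)) x hx) (Commute.all a b) hap hbp ha1
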